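/- arXiv:2204.03483 — 6 statements merged into one kernel-verified Lean document; each statement's English description precedes it below -/
import Mathlib

section
/- Let $A$ be a unital associative $\mathbb{C}$-algebra, let $q \in \mathbb{C}$ with $q \neq 0$, and let $a, b \in A$ satisfy the braid relation $aba = bab$ and the Hecke relations $a^2 = 1 + (q - q^{-1})a$ and $b^2 = 1 + (q - q^{-1})b$. For $u \in \mathbb{C} \setminus \{1\}$ write $a(u) = a + (q - q^{-1})(u-1)^{-1}$ and $b(u) = b + (q - q^{-1})(u-1)^{-1}$. Then for all $u, v \in \mathbb{C}$ with $u \neq 1$, $v \neq 1$ and $uv \neq 1$, the braided Yang--Baxter equation $a(u)\, b(uv)\, a(v) = b(v)\, a(uv)\, b(u)$ holds in $A$ (the Baxterization formula for the Hecke algebra). -/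
/-!
Expanding `(a + r)(b + s)(a + t)` with the Hecke relation for `a` gives a sum whose only
terms not symmetric under `a ↔ b`, `r ↔ t` are `(s (d + r + t)) • a + (r t) • b`, where
`d = q - q⁻¹`. Together with the braid relation, the Yang–Baxter equation therefore reduces
to the scalar identity `s (d + r + t) = r t`, which holds for the Baxterization spectral
parameters `r = d/(u-1)`, `s = d/(uv-1)`, `t = d/(v-1)` because
`(u-1)(v-1) + (u-1) + (v-1) = uv - 1`.
-/

section Hecke

variable {R A : Type*} [CommRing R] [Ring A] [Algebra R A]

theorem hecke_add_mul_add_mul_add (a b : A) (d r s t : R) (ha : a * a = 1 + d • a) :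
    (a + algebraMap R A r) * (b + algebraMap R A s) * (a + algebraMap R A t)
      = a * b * a + t • (a * b) + r • (b * a) + (s * (d + r + t)) • a + (r * t) • b
        + algebraMap R A (s * (1 + r * t)) := by
  simp only [Algebra.algebraMap_eq_smul_one, add_mul, mul_add, smul_mul_assoc,
    mul_smul_comm, one_mul, mul_one, ha]
  match_scalars <;> ring

theorem hecke_yangBaxter_of_mul_eq (a b : A) (d r s t : R)
    (hbraid : a * b * a = b * a * b) (ha : a * a = 1 + d • a) (hb : b * b = 1 + d • b)
    (hkey : s * (d + r + t) = r * t) :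
    (a + algebraMap R A r) * (b + algebraMap R A s) * (a + algebraMap R A t)
      = (b + algebraMap R A t) * (a + algebraMap R A s) * (b + algebraMap R A r) := by
  have hkey' : s * (d + t + r) = t * r := by rw [add_right_comm, hkey, mul_comm]
  rw [hecke_add_mul_add_mul_add a b d r s t ha, hecke_add_mul_add_mul_add b a d t s r hb,
    hbraid, hkey, hkey', mul_comm t r]
  abel

end Hecke

theorem baxterization_parameter_mul_eq {K : Type*} [Field K] (d u v : K)
    (hu : u ≠ 1) (hv : v ≠ 1) (huv : u * v ≠ 1) :
    d * (u * v - 1)⁻¹ * (d + d * (u - 1)⁻¹ + d * (v - 1)⁻¹)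
      = d * (u - 1)⁻¹ * (d * (v - 1)⁻¹) := by
  have hu' : u - 1 ≠ 0 := sub_ne_zero.mpr hu
  have hv' : v - 1 ≠ 0 := sub_ne_zero.mpr hv
  have huv' : u * v - 1 ≠ 0 := sub_ne_zero.mpr huv
  field_simp
  ring

theorem hecke_baxterization_general (A : Type*) [Ring A] [Algebra ℂ A]
    (q : ℂ) (a b : A)
    (hbraid : a * b * a = b * a * b)
    (ha : a * a = 1 + (q - q⁻¹) • a)
    (hb : b * b = 1 + (q - q⁻¹) • b)
    (u v : ℂ) (hu : u ≠ 1) (hv : v ≠ 1) (huv : u * v ≠ 1) :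
    (a + algebraMap ℂ A ((q - q⁻¹) * (u - 1)⁻¹))
        * (b + algebraMap ℂ A ((q - q⁻¹) * (u * v - 1)⁻¹))
        * (a + algebraMap ℂ A ((q - q⁻¹) * (v - 1)⁻¹))
      = (b + algebraMap ℂ A ((q - q⁻¹) * (v - 1)⁻¹))
        * (a + algebraMap ℂ A ((q - q⁻¹) * (u * v - 1)⁻¹))
        * (b + algebraMap ℂ A ((q - q⁻¹) * (u - 1)⁻¹)) :=
  hecke_yangBaxter_of_mul_eq a b _ _ _ _ hbraid ha hb
    (baxterization_parameter_mul_eq _ u v hu hv huv)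

theorem hecke_baxterization (A : Type*) [Ring A] [Algebra ℂ A]
    (q : ℂ) (hq : q ≠ 0) (a b : A)
    (hbraid : a * b * a = b * a * b)
    (ha : a * a = 1 + (q - q⁻¹) • a)
    (hb : b * b = 1 + (q - q⁻¹) • b)
    (u v : ℂ) (hu : u ≠ 1) (hv : v ≠ 1) (huv : u * v ≠ 1) :
    (a + algebraMap ℂ A ((q - q⁻¹) * (u - 1)⁻¹))
        * (b + algebraMap ℂ A ((q - q⁻¹) * (u * v - 1)⁻¹))
        * (a + algebraMap ℂ A ((q - q⁻¹) * (v - 1)⁻¹))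
      = (b + algebraMap ℂ A ((q - q⁻¹) * (v - 1)⁻¹))
        * (a + algebraMap ℂ A ((q - q⁻¹) * (u * v - 1)⁻¹))
        * (b + algebraMap ℂ A ((q - q⁻¹) * (u - 1)⁻¹)) :=
  hecke_baxterization_general A q a b hbraid ha hb u v hu hv huv
end

section
/- Let $N \ge 1$, let $q \in \mathbb{C}$ with $q \neq 0$, let $V = \mathbb{C}^N$ with standard basis $(e_1, \dots, e_N)$, and define $\check{R} \in \mathrm{End}(V \otimes V)$ by $\check{R}(e_a \otimes e_b) = q\, e_a \otimes e_b$ if $a = b$, $\check{R}(e_a \otimes e_b) = e_b \otimes e_a + (q - q^{-1})\, e_a \otimes e_b$ if $a < b$, and $\check{R}(e_a \otimes e_b) = e_b \otimes e_a$ if $a > b$. For $u \in \mathbb{C} \setminus \{1\}$ set $\check{R}(u) = \check{R} + (q - q^{-1})(u - 1)^{-1}\, \mathrm{Id}_{V \otimes V}$. Then for all $u, v \in \mathbb{C}$ with $u \neq 1$, $v \neq 1$, $uv \neq 1$, the braided Yang--Baxter equation $(\check{R}(u) \otimes \mathrm{Id}_V)(\mathrm{Id}_V \otimes \check{R}(uv))(\check{R}(v)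 \otimes \mathrm{Id}_V) = (\mathrm{Id}_V \otimes \check{R}(v))(\check{R}(uv) \otimes \mathrm{Id}_V)(\mathrm{Id}_V \otimes \check{R}(u))$ holds on $V \otimes V \otimes V$. -/
/-!
`Ř` satisfies the Hecke relation `Ř² = (q - q⁻¹) Ř + 1` and the braid relation
`Ř₁₂ Ř₂₃ Ř₁₂ = Ř₂₃ Ř₁₂ Ř₂₃`, both checked on basis vectors. For any `S`, `T` in an algebra
satisfying these two relations with `c = q - q⁻¹`, the difference
`(S + x)(T + z)(S + y) - (T + y)(S + z)(T + x)` reduces to `(x z + y z + c z - x y)(S - T)`,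
and the coefficient vanishes for `x = c/(u - 1)`, `y = c/(v - 1)`, `z = c/(uv - 1)`.
-/

open TensorProduct

noncomputable section

/-- The standard basis vector `e a` of `ℂ^N`. -/
def e (N : ℕ) (a : Fin N) : Fin N → ℂ := Pi.single a 1

variable (V : Type*) [AddCommGroup V] [Module ℂ V]

/-- `S₂₃`: the operator acting as `S` on the second and third tensor factors
(`Id_V ⊗ S`). -/
def op23 (S : Module.End ℂ (V ⊗[ℂ] V)) : Module.End ℂ (V ⊗[ℂ] (V ⊗[ℂ] V)) :=
  LinearMap.lTensor V S

/-- `S₁₂`: the operator acting as `S` on the first and second tensor factors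
(`S ⊗ Id_V`). -/
def op12 (S : Module.End ℂ (V ⊗[ℂ] V)) : Module.End ℂ (V ⊗[ℂ] (V ⊗[ℂ] V)) :=
  (TensorProduct.assoc ℂ V V V).toLinearMap ∘ₗ (LinearMap.rTensor V S) ∘ₗ
    (TensorProduct.assoc ℂ V V V).symm.toLinearMap

/-- The Baxterized operator `Ř(u) = Ř + (q - q⁻¹)(u - 1)⁻¹ Id`. -/
def Rbax (R : Module.End ℂ (V ⊗[ℂ] V)) (q u : ℂ) : Module.End ℂ (V ⊗[ℂ] V) :=
  R + ((q - q⁻¹) * (u - 1)⁻¹) • (1 : Module.End ℂ (V ⊗[ℂ] V))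

def op23AlgHom : Module.End ℂ (V ⊗[ℂ] V) →ₐ[ℂ] Module.End ℂ (V ⊗[ℂ] (V ⊗[ℂ] V)) :=
  Module.End.lTensorAlgHom ℂ (V ⊗[ℂ] V) V

def op12AlgHom : Module.End ℂ (V ⊗[ℂ] V) →ₐ[ℂ] Module.End ℂ (V ⊗[ℂ] (V ⊗[ℂ] V)) :=
  ((TensorProduct.assoc ℂ V V V).conjAlgEquiv ℂ).toAlgHom.comp
    (Module.End.rTensorAlgHom ℂ (V ⊗[ℂ] V) V)

theorem coe_op23AlgHom : ⇑(op23AlgHom V) = op23 V := rfl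

theorem coe_op12AlgHom : ⇑(op12AlgHom V) = op12 V := rfl

theorem op23_tmul (S : Module.End ℂ (V ⊗[ℂ] V)) (x y z : V) :
    op23 V S (x ⊗ₜ[ℂ] (y ⊗ₜ[ℂ] z)) = x ⊗ₜ[ℂ] S (y ⊗ₜ[ℂ] z) := rfl

theorem op12_tmul (S : Module.End ℂ (V ⊗[ℂ] V)) (x y z : V) :
    op12 V S (x ⊗ₜ[ℂ] (y ⊗ₜ[ℂ] z)) = TensorProduct.assoc ℂ V V V (S (x ⊗ₜ[ℂ] y) ⊗ₜ[ℂ] z) := by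
  simp [op12]

theorem op23_Rbax (R : Module.End ℂ (V ⊗[ℂ] V)) (q u : ℂ) :
    op23 V (Rbax V R q u) = op23 V R + ((q - q⁻¹) * (u - 1)⁻¹) • 1 := by
  rw [← coe_op23AlgHom, Rbax, map_add, map_smul, map_one]

theorem op12_Rbax (R : Module.End ℂ (V ⊗[ℂ] V)) (q u : ℂ) :
    op12 V (Rbax V R q u) = op12 V R + ((q - q⁻¹) * (u - 1)⁻¹) • 1 := by
  rw [← coe_op12AlgHom, Rbax, map_add, map_smul, map_one]

theorem yangBaxter_of_hecke_of_braid {K A : Type*} [CommRing K] [Ring A] [Algebra K A]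
    {S T : A} {c x y z : K}
    (hS : S * S = c • S + 1) (hT : T * T = c • T + 1) (hbraid : S * T * S = T * S * T)
    (hxyz : x * y = z * (x + y + c)) :
    (S + x • 1) * (T + z • 1) * (S + y • 1) = (T + y • 1) * (S + z • 1) * (T + x • 1) := by
  simp only [add_mul, mul_add, smul_mul_assoc, mul_smul_comm, one_mul, mul_one, hS, hT, hbraid]
  linear_combination (norm := module) hxyz • (T - S)

theorem baxter_coeff_relation {K : Type*} [Field K] (c : K) {u v : K}
    (hu : u ≠ 1) (hv : v ≠ 1) (huv : u * v ≠ 1) :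
    c * (u - 1)⁻¹ * (c * (v - 1)⁻¹) =
      c * (u * v - 1)⁻¹ * (c * (u - 1)⁻¹ + c * (v - 1)⁻¹ + c) := by
  have hu' : u - 1 ≠ 0 := sub_ne_zero.mpr hu
  have hv' : v - 1 ≠ 0 := sub_ne_zero.mpr hv
  have huv' : u * v - 1 ≠ 0 := sub_ne_zero.mpr huv
  field_simp
  ring

theorem Rbax_yangBaxter {R : Module.End ℂ (V ⊗[ℂ] V)} {q u v : ℂ}
    (hecke : R * R = (q - q⁻¹) • R + 1)
    (braid : op12 V R * op23 V R * op12 V R = op23 V R * op12 V R * op23 V R)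
    (hu : u ≠ 1) (hv : v ≠ 1) (huv : u * v ≠ 1) :
    op12 V (Rbax V R q u) * op23 V (Rbax V R q (u * v)) * op12 V (Rbax V R q v) =
      op23 V (Rbax V R q v) * op12 V (Rbax V R q (u * v)) * op23 V (Rbax V R q u) := by
  simp only [op12_Rbax, op23_Rbax]
  refine yangBaxter_of_hecke_of_braid ?_ ?_ braid
    (baxter_coeff_relation _ hu hv huv)
  · rw [← coe_op12AlgHom, ← map_mul, hecke, map_add, map_smul, map_one]
  · rw [← coe_op23AlgHom, ← map_mul, hecke, map_add, map_smul, map_one]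

theorem basisFun_eq_e (N : ℕ) : ⇑(Pi.basisFun ℂ (Fin N)) = e N := by
  ext a : 1
  simp [e]

theorem e_tmul_e_ext {N : ℕ} {M : Type*} [AddCommMonoid M] [Module ℂ M]
    {f g : (Fin N → ℂ) ⊗[ℂ] (Fin N → ℂ) →ₗ[ℂ] M}
    (h : ∀ a b, f (e N a ⊗ₜ e N b) = g (e N a ⊗ₜ e N b)) : f = g :=
  ((Pi.basisFun ℂ (Fin N)).tensorProduct (Pi.basisFun ℂ (Fin N))).ext fun ⟨a, b⟩ ↦ by
    simp only [Module.Basis.tensorProduct_apply, basisFun_eq_e]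
    exact h a b

theorem e_tmul_e_tmul_e_ext {N : ℕ} {M : Type*} [AddCommMonoid M] [Module ℂ M]
    {f g : (Fin N → ℂ) ⊗[ℂ] ((Fin N → ℂ) ⊗[ℂ] (Fin N → ℂ)) →ₗ[ℂ] M}
    (h : ∀ a b c, f (e N a ⊗ₜ (e N b ⊗ₜ e N c)) = g (e N a ⊗ₜ (e N b ⊗ₜ e N c))) : f = g :=
  ((Pi.basisFun ℂ (Fin N)).tensorProduct
      ((Pi.basisFun ℂ (Fin N)).tensorProduct (Pi.basisFun ℂ (Fin N)))).ext fun ⟨a, b, c⟩ ↦ by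
    simp only [Module.Basis.tensorProduct_apply, basisFun_eq_e]
    exact h a b c

structure IsStandardHeckeR (N : ℕ) (q : ℂ) (R : Module.End ℂ ((Fin N → ℂ) ⊗[ℂ] (Fin N → ℂ))) :
    Prop where
  apply_diag : ∀ a : Fin N, R (e N a ⊗ₜ[ℂ] e N a) = q • (e N a ⊗ₜ[ℂ] e N a)
  apply_of_lt : ∀ a b : Fin N, a < b →
    R (e N a ⊗ₜ[ℂ] e N b) = e N b ⊗ₜ[ℂ] e N a + (q - q⁻¹) • (e N a ⊗ₜ[ℂ] e N b)
  apply_of_gt : ∀ a b : Fin N, b < a → R (e N a ⊗ₜ[ℂ] e N b) = e N b ⊗ₜ[ℂ] e N a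

namespace IsStandardHeckeR

variable {N : ℕ} {q : ℂ} {R : Module.End ℂ ((Fin N → ℂ) ⊗[ℂ] (Fin N → ℂ))}

theorem mul_self (hR : IsStandardHeckeR N q R) (hq : q ≠ 0) : R * R = (q - q⁻¹) • R + 1 := by
  refine e_tmul_e_ext fun a b ↦ ?_
  simp only [Module.End.mul_apply, LinearMap.add_apply, LinearMap.smul_apply,
    Module.End.one_apply]
  rcases lt_trichotomy a b with h | rfl | h
  · simp only [hR.apply_of_lt a b h, hR.apply_of_gt b a h, map_add, map_smul]
    match_scalars <;> ring
  · simp only [hR.apply_diag, map_smul]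
    match_scalars
    field_simp
    ring
  · simp only [hR.apply_of_gt a b h, hR.apply_of_lt b a h, add_comm]

theorem braid (hR : IsStandardHeckeR N q R) (hq : q ≠ 0) :
    op12 _ R * op23 _ R * op12 _ R = op23 _ R * op12 _ R * op23 _ R := by
  refine e_tmul_e_tmul_e_ext fun a b c ↦ ?_
  simp only [Module.End.mul_apply]
  rcases lt_trichotomy a b with hab | hab | hab <;>
    rcases lt_trichotomy b c with hbc | hbc | hbc <;>
    rcases lt_trichotomy a c with hac | hac | hac <;>
    subst_vars <;>
    first
    | omega
    | simp only [hR.apply_diag, hR.apply_of_lt, hR.apply_of_gt, *, op12_tmul, op23_tmul,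
        map_add, map_smul, tmul_add, add_tmul, ← smul_tmul', tmul_smul, TensorProduct.assoc_tmul,
        smul_add, smul_smul] <;>
      match_scalars <;> field_simp <;> ring

end IsStandardHeckeR

theorem hecke_R_matrix_yang_baxter_general (N : ℕ) (q : ℂ) (hq : q ≠ 0)
    (R : Module.End ℂ ((Fin N → ℂ) ⊗[ℂ] (Fin N → ℂ)))
    (hdiag : ∀ a : Fin N, R (e N a ⊗ₜ[ℂ] e N a) = q • (e N a ⊗ₜ[ℂ] e N a))
    (hlt : ∀ a b : Fin N, a < b →
      R (e N a ⊗ₜ[ℂ] e N b) = e N b ⊗ₜ[ℂ] e N a + (q - q⁻¹) • (e N a ⊗ₜ[ℂ] e N b))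
    (hgt : ∀ a b : Fin N, b < a →
      R (e N a ⊗ₜ[ℂ] e N b) = e N b ⊗ₜ[ℂ] e N a)
    (u v : ℂ) (hu : u ≠ 1) (hv : v ≠ 1) (huv : u * v ≠ 1) :
    op12 (Fin N → ℂ) (Rbax (Fin N → ℂ) R q u)
        * op23 (Fin N → ℂ) (Rbax (Fin N → ℂ) R q (u * v))
        * op12 (Fin N → ℂ) (Rbax (Fin N → ℂ) R q v)
      = op23 (Fin N → ℂ) (Rbax (Fin N → ℂ) R q v)
        * op12 (Fin N → ℂ) (Rbax (Fin N → ℂ) R q (u * v))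
        * op23 (Fin N → ℂ) (Rbax (Fin N → ℂ) R q u) := by
  have hR : IsStandardHeckeR N q R := ⟨hdiag, hlt, hgt⟩
  exact Rbax_yangBaxter _ (hR.mul_self hq) (hR.braid hq) hu hv huv

theorem hecke_R_matrix_yang_baxter (N : ℕ) (hN : 1 ≤ N) (q : ℂ) (hq : q ≠ 0)
    (R : Module.End ℂ ((Fin N → ℂ) ⊗[ℂ] (Fin N → ℂ)))
    (hdiag : ∀ a : Fin N, R (e N a ⊗ₜ[ℂ] e N a) = q • (e N a ⊗ₜ[ℂ] e N a))
    (hlt : ∀ a b : Fin N, a < b →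
      R (e N a ⊗ₜ[ℂ] e N b) = e N b ⊗ₜ[ℂ] e N a + (q - q⁻¹) • (e N a ⊗ₜ[ℂ] e N b))
    (hgt : ∀ a b : Fin N, b < a →
      R (e N a ⊗ₜ[ℂ] e N b) = e N b ⊗ₜ[ℂ] e N a)
    (u v : ℂ) (hu : u ≠ 1) (hv : v ≠ 1) (huv : u * v ≠ 1) :
    op12 (Fin N → ℂ) (Rbax (Fin N → ℂ) R q u)
        * op23 (Fin N → ℂ) (Rbax (Fin N → ℂ) R q (u * v))
        * op12 (Fin N → ℂ) (Rbax (Fin N → ℂ) R q v)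
      = op23 (Fin N → ℂ) (Rbax (Fin N → ℂ) R q v)
        * op12 (Fin N → ℂ) (Rbax (Fin N → ℂ) R q (u * v))
        * op23 (Fin N → ℂ) (Rbax (Fin N → ℂ) R q u) :=
  hecke_R_matrix_yang_baxter_general N q hq R hdiag hlt hgt u v hu hv huv

end
end

section
/- Let $A$ be a unital associative $\mathbb{C}$-algebra and let $a, b \in A$ satisfy $a^2 = 1$, $b^2 = 1$ and $aba = bab$. Then for all $u, v \in \mathbb{C}$ with $u \neq 0$, $v \neq 0$ and $u + v \neq 0$, the additive braided Yang--Baxter equation $(a + u^{-1})\,(b + (u+v)^{-1})\,(a + v^{-1}) = (b + v^{-1})\,(a + (u+v)^{-1})\,(b + u^{-1})$ holds in $A$ (the Baxterization formula for the symmetric group). -/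
/-!
Expanding both sides with `a² = b² = 1` and `aba = bab`, the cubic and constant terms agree and
the difference is `(zx + zy - xy)(a - b)`, where `x = u⁻¹`, `y = v⁻¹`, `z = (u + v)⁻¹`. So the
equation holds as soon as `xy = z(x + y)`, which is `1/(uv) = (1/(u+v))·((u+v)/(uv))`.
-/

theorem algebraMap_add_mul_add_mul_add_eq {R A : Type*} [CommSemiring R] [Semiring A]
    [Algebra R A] {a b : A} (ha : a * a = 1) (hb : b * b = 1) (hbraid : a * b * a = b * a * b)
    {x y z : R} (hxyz : x * y = z * (x + y)) :
    (a + algebraMap R A x) * (b + algebraMap R A z) * (a + algebraMap R A y)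
      = (b + algebraMap R A y) * (a + algebraMap R A z) * (b + algebraMap R A x) := by
  simp only [Algebra.algebraMap_eq_smul_one, mul_add, add_mul, smul_mul_assoc,
    mul_smul_comm, one_mul, mul_one, ha, hb, hbraid]
  match_scalars <;> ring_nf at hxyz ⊢ <;> simp only [hxyz]

theorem inv_mul_inv_eq_inv_add_mul_inv_add_inv {K : Type*} [Field K] {u v : K}
    (hu : u ≠ 0) (hv : v ≠ 0) (huv : u + v ≠ 0) :
    u⁻¹ * v⁻¹ = (u + v)⁻¹ * (u⁻¹ + v⁻¹) := by
  rw [inv_add_inv hu hv, ← mul_div_assoc, inv_mul_cancel₀ huv, one_div, mul_inv, mul_comm]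

theorem symmetric_group_baxterization (A : Type*) [Ring A] [Algebra ℂ A]
    (a b : A) (ha : a * a = 1) (hb : b * b = 1) (hbraid : a * b * a = b * a * b)
    (u v : ℂ) (hu : u ≠ 0) (hv : v ≠ 0) (huv : u + v ≠ 0) :
    (a + algebraMap ℂ A u⁻¹) * (b + algebraMap ℂ A (u + v)⁻¹) * (a + algebraMap ℂ A v⁻¹)
      = (b + algebraMap ℂ A v⁻¹) * (a + algebraMap ℂ A (u + v)⁻¹)
        * (b + algebraMap ℂ A u⁻¹) :=
  algebraMap_add_mul_add_mul_add_eq ha hb hbraid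
    (inv_mul_inv_eq_inv_add_mul_inv_add_inv hu hv huv)
end

section
/- Let $A$ be a unital associative $\mathbb{C}$-algebra and, for each integer $i \ge 1$, let $\sigma_i : \mathbb{C} \to A$ be a function. Assume that for all $i \ge 1$ and all $u, v \in \mathbb{C}$ the braided Yang--Baxter equation $\sigma_i(u)\,\sigma_{i+1}(uv)\,\sigma_i(v) = \sigma_{i+1}(v)\,\sigma_i(uv)\,\sigma_{i+1}(u)$ holds, and that $\sigma_i(u)\,\sigma_j(v) = \sigma_j(v)\,\sigma_i(u)$ whenever $|i - j| > 1$. Fix $k \ge 1$ and nonzero complex parameters $c_1, \dots, c_k$, and for each $m \ge 1$ define the fused element $\sigma_m^{(\mathbf{c})}(u) = \prod_{i=k,\dots,1}^{\leftarrow} \big( \sigma_{(m-1)k+i}(u \tfrac{c_1}{c_i})\, \sigma_{(m-1)k+i+1}(u \tfrac{c_2}{c_i}) \cdots \sigma_{(m-1)k+i+k-1}(u \tfrac{c_k}{c_i}) \big)$, where the outer product is taken from left to right in decreasing order of $i$ (the factor with $i = k$ first) and each inner product from left to right in increasing order of the second index. Then for every $m \ge 1$ and all $u, v \in \mathbb{C}$,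 the braided Yang--Baxter equation $\sigma_m^{(\mathbf{c})}(u)\, \sigma_{m+1}^{(\mathbf{c})}(uv)\, \sigma_m^{(\mathbf{c})}(v) = \sigma_{m+1}^{(\mathbf{c})}(v)\, \sigma_m^{(\mathbf{c})}(uv)\, \sigma_{m+1}^{(\mathbf{c})}(u)$ holds in $A$ (the first step of the fusion procedure). -/
/-!
Label the strands of three consecutive blocks by (block, position) and let the crossing of
strand `x` over strand `y` carry the parameter `r x y`; a fused element is then the crossing of
one block of `k` strands over the next. Across the three blocks these parameters form a cocycle,
`r x y * r y z = r x z` (the `c`'s cancel), so the braided Yang–Baxter equation for blocks follows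
from the one for single strands by pushing one strand at a time through the others; crossings of
strands that never meet are exchanged by distant commutation.
-/

/-- The fused element
`σₘ⁽ᶜ⁾(u) = ∏←_{i=k,…,1} σ_{(m-1)k+i}(u c₁/cᵢ) σ_{(m-1)k+i+1}(u c₂/cᵢ) ⋯ σ_{(m-1)k+i+k-1}(u c_k/cᵢ)`,
the outer product taken from left to right in decreasing order of `i`
and each inner product from left to right in increasing order. -/
noncomputable def fusedSigma {A : Type*} [Ring A] (σ : ℕ → ℂ → A) (k : ℕ) (c : ℕ → ℂ)
    (m : ℕ) (u : ℂ) : A :=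
  ((List.range k).reverse.map (fun s =>
    ((List.range k).map (fun t =>
      σ ((m - 1) * k + (s + 1) + t) (u * c (t + 1) / c (s + 1)))).prod)).prod

lemma Submonoid.commute_of_mem_closure {A : Type*} [Monoid A] {S T : Set A}
    (hST : ∀ a ∈ S, ∀ b ∈ T, Commute a b)
    {a b : A} (ha : a ∈ Submonoid.closure S) (hb : b ∈ Submonoid.closure T) : Commute a b := by
  induction hb using Submonoid.closure_induction with
  | mem b hb =>
    induction ha using Submonoid.closure_induction with
    | mem a ha => exact hST a ha b hb
    | one => exact Commute.one_left b
    | mul _ _ _ _ h₁ h₂ => exact h₁.mul_left h₂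
  | one => exact Commute.one_right a
  | mul _ _ _ _ h₁ h₂ => exact h₁.mul_right h₂

lemma mul_mul_mul_eq_of_eq {A : Type*} [Monoid A] {a b c d e f : A} (h : a * b * c = d * e * f)
    (w : A) :
    a * (b * (c * w)) = d * (e * (f * w)) := by
  simp only [← mul_assoc, h]

namespace Fusion

variable {M A ι : Type*} [Monoid A]

def IsBraidedYangBaxter [Mul M] (σ : ℕ → M → A) : Prop :=
  ∀ i u v, σ i u * σ (i + 1) (u * v) * σ i v = σ (i + 1) v * σ i (u * v) * σ (i + 1) u

def IsFarCommuting (σ : ℕ → M → A) : Prop :=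
  ∀ i j, i + 1 < j → ∀ u v, Commute (σ i u) (σ j v)

section Support

variable (σ : ℕ → M → A)

/-- `σ i u` acts on the strands `i` and `i + 1`; this is the submonoid generated by the
generators acting only on strands in `[lo, hi)`. -/
def strandSubmonoid (lo hi : ℕ) : Submonoid A :=
  Submonoid.closure {a | ∃ i u, lo ≤ i ∧ i + 2 ≤ hi ∧ σ i u = a}

variable {σ}

lemma mem_strandSubmonoid {lo hi i : ℕ} (hlo : lo ≤ i) (hhi : i + 2 ≤ hi) (u : M) :
    σ i u ∈ strandSubmonoid σ lo hi :=
  Submonoid.subset_closure ⟨i, u, hlo, hhi, rfl⟩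

lemma strandSubmonoid_mono {lo hi lo' hi' : ℕ} (hlo : lo' ≤ lo) (hhi : hi ≤ hi') :
    strandSubmonoid σ lo hi ≤ strandSubmonoid σ lo' hi' :=
  Submonoid.closure_mono fun _ ⟨i, u, h₁, h₂, hi⟩ => ⟨i, u, by omega, by omega, hi⟩

lemma IsFarCommuting.commute_of_mem_strandSubmonoid (hσ : IsFarCommuting σ)
    {lo mid mid' hi : ℕ} (hmid : mid ≤ mid') {a b : A}
    (ha : a ∈ strandSubmonoid σ lo mid) (hb : b ∈ strandSubmonoid σ mid' hi) : Commute a b :=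
  Submonoid.commute_of_mem_closure
    (by rintro _ ⟨i, u, -, hi, rfl⟩ _ ⟨j, v, hj, -, rfl⟩; exact hσ i j (by omega) u v) ha hb

end Support

section Crossing

variable (σ : ℕ → M → A) (r : ι → ι → M)

/-- Strand `x` crosses the block of strands `Y` from left to right, the crossing with
`y` happening at position `p + (index of y)` and carrying the parameter `r x y`. -/
def crossStrand : ℕ → ι → List ι → A
  | _, _, [] => 1
  | p, x, y :: Y => σ p (r x y) * crossStrand (p + 1) x Y

/-- The block `X` crosses the block `Y`; the row of the last strand of `X` is the leftmost
factor. -/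
def crossBlock : ℕ → List ι → List ι → A
  | _, [], _ => 1
  | p, x :: X, Y => crossBlock (p + 1) X Y * crossStrand σ r p x Y

variable {σ r}

@[simp]
lemma crossBlock_nil_left (p : ℕ) (Y : List ι) : crossBlock σ r p [] Y = 1 := rfl

lemma crossBlock_singleton_left (p : ℕ) (x : ι) (Y : List ι) :
    crossBlock σ r p [x] Y = crossStrand σ r p x Y := one_mul _

lemma crossBlock_cons_left (p : ℕ) (x : ι) (X Y : List ι) :
    crossBlock σ r p (x :: X) Y = crossBlock σ r (p + 1) X Y * crossBlock σ r p [x] Y := by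
  rw [crossBlock, crossBlock_singleton_left]

@[simp]
lemma crossBlock_nil_right (p : ℕ) (X : List ι) : crossBlock σ r p X [] = 1 := by
  induction X generalizing p with
  | nil => rfl
  | cons x X ih => rw [crossBlock, ih, crossStrand, one_mul]

lemma crossBlock_singleton (p : ℕ) (x y : ι) : crossBlock σ r p [x] [y] = σ p (r x y) := by
  rw [crossBlock_singleton_left, crossStrand, crossStrand, mul_one]

lemma crossStrand_mem_strandSubmonoid (p : ℕ) (x : ι) (Y : List ι) :
    crossStrand σ r p x Y ∈ strandSubmonoid σ p (p + Y.length + 1) := by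
  induction Y generalizing p with
  | nil => exact one_mem _
  | cons y Y ih =>
    refine mul_mem (mem_strandSubmonoid le_rfl (by simp) _) ?_
    exact strandSubmonoid_mono (by omega) (by simp; omega) (ih (p + 1))

lemma crossBlock_mem_strandSubmonoid (p : ℕ) (X Y : List ι) :
    crossBlock σ r p X Y ∈ strandSubmonoid σ p (p + X.length + Y.length) := by
  induction X generalizing p with
  | nil => exact one_mem _
  | cons x X ih =>
    refine mul_mem (strandSubmonoid_mono (by omega) (by simp; omega) (ih (p + 1))) ?_
    exact strandSubmonoid_mono le_rfl (by simp) (crossStrand_mem_strandSubmonoid p x Y)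

lemma IsFarCommuting.commute_crossBlock (hσ : IsFarCommuting σ) {p q : ℕ} {X Y : List ι}
    (hpq : p + X.length + Y.length ≤ q) (X' Y' : List ι) :
    Commute (crossBlock σ r p X Y) (crossBlock σ r q X' Y') :=
  hσ.commute_of_mem_strandSubmonoid hpq (crossBlock_mem_strandSubmonoid p X Y)
    (crossBlock_mem_strandSubmonoid q X' Y')

lemma crossStrand_append (p : ℕ) (x : ι) (Y₁ Y₂ : List ι) :
    crossStrand σ r p x (Y₁ ++ Y₂)
      = crossStrand σ r p x Y₁ * crossStrand σ r (p + Y₁.length) x Y₂ := by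
  induction Y₁ generalizing p with
  | nil => simp [crossStrand]
  | cons y Y₁ ih =>
    rw [List.cons_append, crossStrand, crossStrand, ih, mul_assoc, List.length_cons,
      add_right_comm, add_assoc]

lemma crossBlock_append_left (p : ℕ) (X₁ X₂ Y : List ι) :
    crossBlock σ r p (X₁ ++ X₂) Y
      = crossBlock σ r (p + X₁.length) X₂ Y * crossBlock σ r p X₁ Y := by
  induction X₁ generalizing p with
  | nil => simp
  | cons x X₁ ih =>
    rw [List.cons_append, crossBlock, ih, crossBlock, mul_assoc,
      List.length_cons, add_right_comm, add_assoc]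

lemma IsFarCommuting.crossBlock_append_right (hσ : IsFarCommuting σ) (p : ℕ)
    (X Y₁ Y₂ : List ι) :
    crossBlock σ r p X (Y₁ ++ Y₂)
      = crossBlock σ r p X Y₁ * crossBlock σ r (p + Y₁.length) X Y₂ := by
  induction X generalizing p with
  | nil => simp
  | cons x X ih =>
    have hswap : Commute (crossStrand σ r p x Y₁) (crossBlock σ r (p + Y₁.length + 1) X Y₂) := by
      simpa only [crossBlock_singleton_left] using
        hσ.commute_crossBlock (X := [x]) (Y := Y₁) (by simp; omega) X Y₂
    rw [crossBlock, ih, crossStrand_append, crossBlock, crossBlock, add_right_comm]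
    simp only [mul_assoc, hswap.symm.left_comm]

lemma IsFarCommuting.crossBlock_cons_right (hσ : IsFarCommuting σ) (p : ℕ) (X : List ι) (y : ι)
    (Y : List ι) :
    crossBlock σ r p X (y :: Y) = crossBlock σ r p X [y] * crossBlock σ r (p + 1) X Y :=
  hσ.crossBlock_append_right p X [y] Y

section YangBaxter

variable [Mul M] (hσ : IsBraidedYangBaxter σ) (hfar : IsFarCommuting σ)
include hσ hfar

lemma crossBlock_yangBaxter_single_single (x y : ι) (Z : List ι) (p : ℕ)
    (hr : ∀ z ∈ Z, r x y * r y z = r x z) :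
    crossBlock σ r p [x] [y] * crossBlock σ r (p + 1) [x] Z * crossBlock σ r p [y] Z
      = crossBlock σ r (p + 1) [y] Z * crossBlock σ r p [x] Z
        * crossBlock σ r (p + Z.length) [x] [y] := by
  induction Z generalizing p with
  | nil => simp
  | cons z Z ih =>
    have hxyz : crossBlock σ r p [x] [y] * crossBlock σ r (p + 1) [x] [z]
        * crossBlock σ r p [y] [z] = crossBlock σ r (p + 1) [y] [z] * crossBlock σ r p [x] [z]
          * crossBlock σ r (p + 1) [x] [y] := by
      simp only [crossBlock_singleton, ← hr z List.mem_cons_self]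
      exact hσ p _ _
    have ih' : crossBlock σ r (p + 1) [x] [y] * (crossBlock σ r (p + 1 + 1) [x] Z
        * crossBlock σ r (p + 1) [y] Z) = crossBlock σ r (p + 1 + 1) [y] Z
          * (crossBlock σ r (p + 1) [x] Z * crossBlock σ r (p + 1 + Z.length) [x] [y]) := by
      simpa only [mul_assoc] using ih (p + 1) fun z' hz' => hr z' (List.mem_cons_of_mem z hz')
    have h₁ : Commute (crossBlock σ r (p + 1 + 1) [x] Z) (crossBlock σ r p [y] [z]) :=
      (hfar.commute_crossBlock (by simp) _ _).symm
    have h₂ : Commute (crossBlock σ r p [x] [z]) (crossBlock σ r (p + 1 + 1) [y] Z) :=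
      hfar.commute_crossBlock (by simp) _ _
    rw [hfar.crossBlock_cons_right (p + 1) [x] z, hfar.crossBlock_cons_right p [y] z,
      hfar.crossBlock_cons_right (p + 1) [y] z, hfar.crossBlock_cons_right p [x] z,
      List.length_cons, show p + (Z.length + 1) = p + 1 + Z.length by omega]
    simp only [mul_assoc]
    rw [h₁.left_comm, mul_mul_mul_eq_of_eq hxyz, ih', h₂.left_comm]

lemma crossBlock_yangBaxter_single (x : ι) (Y Z : List ι) (p : ℕ)
    (hr : ∀ y ∈ Y, ∀ z ∈ Z, r x y * r y z = r x z) :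
    crossBlock σ r p [x] Y * crossBlock σ r (p + Y.length) [x] Z * crossBlock σ r p Y Z
      = crossBlock σ r (p + 1) Y Z * crossBlock σ r p [x] Z
        * crossBlock σ r (p + Z.length) [x] Y := by
  induction Y generalizing p with
  | nil => simp
  | cons y Y ih =>
    have hxyZ := crossBlock_yangBaxter_single_single hσ hfar x y Z p (hr y List.mem_cons_self)
    have ih' := ih (p + 1) fun y' hy' => hr y' (List.mem_cons_of_mem y hy')
    have h₁ : Commute (crossBlock σ r p [x] [y]) (crossBlock σ r (p + 1 + 1) Y Z) :=
      hfar.commute_crossBlock (by simp) _ _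
    have h₂ : Commute (crossBlock σ r (p + 1 + Z.length) [x] Y) (crossBlock σ r p [y] Z) :=
      (hfar.commute_crossBlock (by simp) _ _).symm
    rw [hfar.crossBlock_cons_right p [x], crossBlock_cons_left p y, crossBlock_cons_left (p + 1) y,
      hfar.crossBlock_cons_right (p + Z.length) [x], List.length_cons,
      show p + (Y.length + 1) = p + 1 + Y.length by omega,
      show p + Z.length + 1 = p + 1 + Z.length by omega]
    simp only [mul_assoc]
    rw [mul_mul_mul_eq_of_eq ih', h₁.left_comm, h₂, mul_mul_mul_eq_of_eq hxyZ]

theorem crossBlock_yangBaxter (X Y Z : List ι) (p : ℕ)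
    (hr : ∀ x ∈ X, ∀ y ∈ Y, ∀ z ∈ Z, r x y * r y z = r x z) :
    crossBlock σ r p X Y * crossBlock σ r (p + Y.length) X Z * crossBlock σ r p Y Z
      = crossBlock σ r (p + X.length) Y Z * crossBlock σ r p X Z
        * crossBlock σ r (p + Z.length) X Y := by
  induction X generalizing p with
  | nil => simp
  | cons x X ih =>
    have hxYZ : crossBlock σ r p [x] Y * (crossBlock σ r (p + Y.length) [x] Z
        * crossBlock σ r p Y Z) = crossBlock σ r (p + 1) Y Z
          * (crossBlock σ r p [x] Z * crossBlock σ r (p + Z.length) [x] Y) := by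
      simpa only [mul_assoc] using
        crossBlock_yangBaxter_single hσ hfar x Y Z p (hr x List.mem_cons_self)
    have ih' := ih (p + 1) fun x' hx' => hr x' (List.mem_cons_of_mem x hx')
    have h₁ : Commute (crossBlock σ r p [x] Y) (crossBlock σ r (p + 1 + Y.length) X Z) :=
      hfar.commute_crossBlock (by simp) _ _
    have h₂ : Commute (crossBlock σ r (p + 1 + Z.length) X Y) (crossBlock σ r p [x] Z) :=
      (hfar.commute_crossBlock (by simp) _ _).symm
    rw [crossBlock_cons_left p x, crossBlock_cons_left (p + Y.length) x,
      crossBlock_cons_left p x X Z, crossBlock_cons_left (p + Z.length) x, List.length_cons,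
      show p + (X.length + 1) = p + 1 + X.length by omega,
      show p + Y.length + 1 = p + 1 + Y.length by omega,
      show p + Z.length + 1 = p + 1 + Z.length by omega]
    simp only [mul_assoc]
    rw [h₁.left_comm, hxYZ, mul_mul_mul_eq_of_eq ih', h₂.left_comm]

end YangBaxter

lemma crossStrand_map_range (p : ℕ) (x : ι) (h : ℕ → ι) (n : ℕ) :
    crossStrand σ r p x ((List.range n).map h)
      = ((List.range n).map fun t => σ (p + t) (r x (h t))).prod := by
  induction n with
  | zero => rfl
  | succ n ih =>
    rw [List.range_succ, List.map_append, crossStrand_append, ih, List.map_append,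
      List.prod_append, List.length_map, List.length_range]
    simp [crossStrand]

lemma crossBlock_map_range (p : ℕ) (g : ℕ → ι) (Y : List ι) (n : ℕ) :
    crossBlock σ r p ((List.range n).map g) Y
      = ((List.range n).reverse.map fun s => crossStrand σ r (p + s) (g s) Y).prod := by
  induction n with
  | zero => rfl
  | succ n ih =>
    rw [List.range_succ, List.map_append, crossBlock_append_left, ih, List.reverse_append,
      List.length_map, List.length_range]
    simp [crossBlock_singleton_left]

end Crossing

section FusedSigma

variable {β : Type*}

def block (a : β) (k : ℕ) : List (β × ℕ) := (List.range k).map ((a, ·))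

@[simp]
lemma length_block (a : β) (k : ℕ) : (block a k).length = k := by simp [block]

noncomputable def fusionRatio (w : β → β → ℂ) (c : ℕ → ℂ) (x y : β × ℕ) : ℂ :=
  w x.1 y.1 * c (y.2 + 1) / c (x.2 + 1)

lemma fusionRatio_mul {w : β → β → ℂ} {c : ℕ → ℂ} {a b d : β} (hw : w a b * w b d = w a d)
    (s : ℕ) {t : ℕ} (hct : c (t + 1) ≠ 0) (q : ℕ) :
    fusionRatio w c (a, s) (b, t) * fusionRatio w c (b, t) (d, q)
      = fusionRatio w c (a, s) (d, q) := by
  simp only [fusionRatio, ← hw]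
  field_simp

lemma fusedSigma_eq_crossBlock {R : Type*} [Ring R] (σ : ℕ → ℂ → R) (k : ℕ) (c : ℕ → ℂ)
    (m : ℕ) (w : β → β → ℂ) (a b : β) :
    fusedSigma σ k c m (w a b) = crossBlock (fun i => σ (i + 1)) (fusionRatio w c)
      ((m - 1) * k) (block a k) (block b k) := by
  rw [block, crossBlock_map_range, fusedSigma]
  congr 1
  refine List.map_congr_left fun s _ => ?_
  rw [block, crossStrand_map_range]
  congr 1
  refine List.map_congr_left fun t _ => ?_
  rw [show (m - 1) * k + (s + 1) + t = (m - 1) * k + s + t + 1 by omega]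
  rfl

end FusedSigma

end Fusion

open Fusion in
theorem fusion_first_step_general (A : Type*) [Ring A] (σ : ℕ → ℂ → A)
    (hYB : ∀ i : ℕ, 1 ≤ i → ∀ u v : ℂ,
      σ i u * σ (i + 1) (u * v) * σ i v = σ (i + 1) v * σ i (u * v) * σ (i + 1) u)
    (hcomm : ∀ i j : ℕ, 1 ≤ i → 1 ≤ j → (i + 1 < j ∨ j + 1 < i) → ∀ u v : ℂ,
      σ i u * σ j v = σ j v * σ i u)
    (k : ℕ) (c : ℕ → ℂ) (hc : ∀ j : ℕ, 1 ≤ j → j ≤ k → c j ≠ 0)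
    (m : ℕ) (hm : 1 ≤ m) (u v : ℂ) :
    fusedSigma σ k c m u * fusedSigma σ k c (m + 1) (u * v) * fusedSigma σ k c m v
      = fusedSigma σ k c (m + 1) v * fusedSigma σ k c m (u * v)
        * fusedSigma σ k c (m + 1) u := by
  have hYB' : IsBraidedYangBaxter fun i => σ (i + 1) := fun i => hYB (i + 1) (by omega)
  have hfar : IsFarCommuting fun i => σ (i + 1) := fun i j hij u v =>
    hcomm (i + 1) (j + 1) (by omega) (by omega) (by omega) u v
  -- `w a b` is the parameter of block `a` crossing block `b`, for `a < b`
  let w : Fin 3 → Fin 3 → ℂ := ![![0, u, u * v], ![0, 0, v], ![0, 0, 0]]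
  have hcocycle : ∀ x ∈ block 0 k, ∀ y ∈ block 1 k, ∀ z ∈ block 2 k,
      fusionRatio w c x y * fusionRatio w c y z = fusionRatio w c x z := by
    simp only [block, List.mem_map, List.mem_range]
    rintro _ ⟨s, -, rfl⟩ _ ⟨t, ht, rfl⟩ _ ⟨q, -, rfl⟩
    exact fusionRatio_mul rfl s (hc (t + 1) (by omega) (by omega)) q
  have key := crossBlock_yangBaxter hYB' hfar _ _ _ ((m - 1) * k) hcocycle
  rw [length_block, length_block, length_block,
    show (m - 1) * k + k = (m + 1 - 1) * k by
      rw [Nat.add_sub_cancel, ← Nat.succ_mul, Nat.succ_eq_add_one, Nat.sub_add_cancel hm]] at key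
  simp only [← fusedSigma_eq_crossBlock] at key
  exact key

theorem fusion_first_step (A : Type*) [Ring A] [Algebra ℂ A] (σ : ℕ → ℂ → A)
    (hYB : ∀ i : ℕ, 1 ≤ i → ∀ u v : ℂ,
      σ i u * σ (i + 1) (u * v) * σ i v = σ (i + 1) v * σ i (u * v) * σ (i + 1) u)
    (hcomm : ∀ i j : ℕ, 1 ≤ i → 1 ≤ j → (i + 1 < j ∨ j + 1 < i) → ∀ u v : ℂ,
      σ i u * σ j v = σ j v * σ i u)
    (k : ℕ) (hk : 1 ≤ k) (c : ℕ → ℂ) (hc : ∀ j : ℕ, 1 ≤ j → j ≤ k → c j ≠ 0)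
    (m : ℕ) (hm : 1 ≤ m) (u v : ℂ) :
    fusedSigma σ k c m u * fusedSigma σ k c (m + 1) (u * v) * fusedSigma σ k c m v
      = fusedSigma σ k c (m + 1) v * fusedSigma σ k c m (u * v)
        * fusedSigma σ k c (m + 1) u :=
  fusion_first_step_general A σ hYB hcomm k c hc m hm u v
end

section
/- Let $A$ be a unital associative $\mathbb{C}$-algebra, let $k \ge 2$, and let $q \in \mathbb{C}$ with $q \neq 0$ and $q^{2m} \neq 1$ for all $m = 1, \dots, k-1$. Let $\sigma_1, \dots, \sigma_{k-1} \in A$ satisfy the braid relations $\sigma_i \sigma_{i+1} \sigma_i = \sigma_{i+1} \sigma_i \sigma_{i+1}$, $\sigma_i \sigma_j = \sigma_j \sigma_i$ for $|i - j| > 1$, and the Hecke relations $\sigma_i^2 = 1 + (q - q^{-1})\sigma_i$. For $u \in \mathbb{C} \setminus \{1\}$ write $\sigma_j(u) = \sigma_j + (q - q^{-1})(u - 1)^{-1}$, let $c_j = q^{2(j-1)}$ for $j = 1, \dots, k$, and set $E = \prod_{i=1,\dots,k-1}^{\rightarrow} \big( \sigma_i(\tfrac{c_{i+1}}{c_1})\,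 \sigma_{i-1}(\tfrac{c_{i+1}}{c_2}) \cdots \sigma_1(\tfrac{c_{i+1}}{c_i}) \big)$, the product taken from left to right in increasing order of $i$. Then $E\, \sigma_i = q\, E$ for every $i = 1, \dots, k-1$ (so that $E$ is proportional to the $q$-symmetriser, the fusion-procedure evaluation for the one-row standard Young tableau). -/
/-- The Baxterized generator `σⱼ(u) = σⱼ + (q - q⁻¹)(u - 1)⁻¹`. -/
noncomputable def heckeBax {A : Type*} [Ring A] [Algebra ℂ A] (σ : ℕ → A) (q : ℂ)
    (j : ℕ) (u : ℂ) : A :=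
  σ j + algebraMap ℂ A ((q - q⁻¹) * (u - 1)⁻¹)

/-- The fusion element
`E = ∏→_{i=1,…,k-1} σᵢ(c_{i+1}/c₁) σ_{i-1}(c_{i+1}/c₂) ⋯ σ₁(c_{i+1}/cᵢ)`,
the outer product taken from left to right in increasing order of `i`. -/
noncomputable def fusionE {A : Type*} [Ring A] [Algebra ℂ A] (σ : ℕ → A) (q : ℂ)
    (k : ℕ) (c : ℕ → ℂ) : A :=
  ((List.range (k - 1)).map (fun s =>
    ((List.range (s + 1)).map (fun t =>
      heckeBax σ q (s + 1 - t) (c (s + 2) / c (t + 1)))).prod)).prod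

/-!
Write `fⱼ = σⱼ(q^{2j})` and `gⱼ = σⱼ - q`, so that `E σᵢ = q E` means `E gᵢ = 0`, and the Hecke
relation reads `(σⱼ + q⁻¹) gⱼ = 0`, i.e. `f₁ g₁ = 0`. The fusion element factors as
`E_{n+1} = E_n W_n` with `W_n = f_n ⋯ f₁`; induct on `n`. `W_n g₁ = 0` because `W_n` ends in `f₁`.
For `i ≥ 2`, the Yang–Baxter equation at `v = q⁻²`, where `σᵢ(q⁻²) = gᵢ`, gives
`fᵢ f_{i-1} gᵢ = g_{i-1} σᵢ(q^{2(i-1)}) σ_{i-1}(q^{2i})`; since `gᵢ` commutes with `W_{i-2}` and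
`g_{i-1}` with `f_n, …, f_{i+1}`, the product `E_n W_n gᵢ` contains the factor `E_n g_{i-1} = 0`.
-/

section

variable {A : Type*} [Ring A] [Algebra ℂ A]

structure IsHeckeGenerators (σ : ℕ → A) (q : ℂ) (n : ℕ) : Prop where
  braid : ∀ i : ℕ, 1 ≤ i → i + 1 ≤ n → σ i * σ (i + 1) * σ i = σ (i + 1) * σ i * σ (i + 1)
  comm : ∀ i j : ℕ, 1 ≤ i → i ≤ n → 1 ≤ j → j ≤ n →
    (i + 1 < j ∨ j + 1 < i) → σ i * σ j = σ j * σ i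
  hecke : ∀ i : ℕ, 1 ≤ i → i ≤ n → σ i * σ i = 1 + (q - q⁻¹) • σ i

theorem IsHeckeGenerators.mono {σ : ℕ → A} {q : ℂ} {m n : ℕ} (h : IsHeckeGenerators σ q n)
    (hmn : m ≤ n) : IsHeckeGenerators σ q m where
  braid i hi hin := h.braid i hi (by omega)
  comm i j hi hin hj hjn := h.comm i j hi (by omega) hj (by omega)
  hecke i hi hin := h.hecke i hi (by omega)

theorem hecke_quadratic_factor {q : ℂ} (hq0 : q ≠ 0) {s : A}
    (hs : s * s = 1 + (q - q⁻¹) • s) :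
    (s + algebraMap ℂ A q⁻¹) * (s - algebraMap ℂ A q) = 0 := by
  simp only [add_mul, mul_sub, hs, Algebra.algebraMap_eq_smul_one, smul_mul_assoc,
    mul_smul_comm, one_mul, mul_one]
  match_scalars <;> field_simp <;> ring

theorem yangBaxter_of_hecke {e b m d : ℂ} {s t : A} (hbr : s * t * s = t * s * t)
    (hs : s * s = 1 + e • s) (ht : t * t = 1 + e • t) (hsc : m * d + b * m + m * e = b * d) :
    (s + algebraMap ℂ A b) * (t + algebraMap ℂ A m) * (s + algebraMap ℂ A d)
      = (t + algebraMap ℂ A d) * (s + algebraMap ℂ A m) * (t + algebraMap ℂ A b) := by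
  simp only [Algebra.algebraMap_eq_smul_one, mul_add, add_mul, mul_one, one_mul,
    smul_mul_assoc, mul_smul_comm, smul_smul, smul_add]
  rw [hs, ht, hbr]
  match_scalars <;> first | ring1 | linear_combination hsc | linear_combination -hsc

theorem heckeBax_yangBaxter {σ : ℕ → A} {q : ℂ} {i j : ℕ}
    (hbr : σ i * σ j * σ i = σ j * σ i * σ j)
    (hi : σ i * σ i = 1 + (q - q⁻¹) • σ i) (hj : σ j * σ j = 1 + (q - q⁻¹) • σ j)
    {u v : ℂ} (hu : u ≠ 1) (hv : v ≠ 1) (huv : u * v ≠ 1) :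
    heckeBax σ q i u * heckeBax σ q j (u * v) * heckeBax σ q i v
      = heckeBax σ q j v * heckeBax σ q i (u * v) * heckeBax σ q j u := by
  refine yangBaxter_of_hecke hbr hi hj ?_
  have hu' : u - 1 ≠ 0 := sub_ne_zero.mpr hu
  have hv' : v - 1 ≠ 0 := sub_ne_zero.mpr hv
  have huv' : u * v - 1 ≠ 0 := sub_ne_zero.mpr huv
  field_simp
  ring

theorem heckeBax_sq (σ : ℕ → A) {q : ℂ} (hq0 : q ≠ 0) (hq2 : q ^ 2 ≠ 1) (j : ℕ) :
    heckeBax σ q j (q ^ 2) = σ j + algebraMap ℂ A q⁻¹ := by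
  have : q ^ 2 - 1 ≠ 0 := sub_ne_zero.mpr hq2
  rw [heckeBax]
  congr 2
  field_simp

theorem heckeBax_inv_sq (σ : ℕ → A) {q : ℂ} (hq0 : q ≠ 0) (hq2 : q ^ 2 ≠ 1) (j : ℕ) :
    heckeBax σ q j (q ^ 2)⁻¹ = σ j - algebraMap ℂ A q := by
  have : (q ^ 2)⁻¹ - 1 ≠ 0 := sub_ne_zero.mpr (inv_ne_one.mpr hq2)
  rw [heckeBax, sub_eq_add_neg (σ j), ← map_neg]
  congr 2
  field_simp
  ring

/-- `rowFactor σ q a = σ_a(q^{2a}) σ_{a-1}(q^{2(a-1)}) ⋯ σ_1(q^2)`; since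
`c_{a+1}/c_{t+1} = q^{2(a-t)}`, this is the `a`-th factor of the outer product in `fusionE`. -/
noncomputable def rowFactor (σ : ℕ → A) (q : ℂ) : ℕ → A
  | 0 => 1
  | a + 1 => heckeBax σ q (a + 1) (q ^ (2 * (a + 1))) * rowFactor σ q a

theorem rowFactor_eq_prod (σ : ℕ → A) (q : ℂ) (a : ℕ) :
    rowFactor σ q a
      = ((List.range a).map fun t => heckeBax σ q (a - t) (q ^ (2 * (a - t)))).prod := by
  induction a with
  | zero => rfl
  | succ a ih => simp [rowFactor, ih, List.range_succ_eq_map, Function.comp_def]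

theorem fusionE_succ (σ : ℕ → A) {q : ℂ} (hq0 : q ≠ 0) {c : ℕ → ℂ}
    (hc : ∀ j : ℕ, c j = q ^ (2 * (j - 1))) (n : ℕ) :
    fusionE σ q (n + 2) c = fusionE σ q (n + 1) c * rowFactor σ q (n + 1) := by
  rw [fusionE, fusionE, show n + 2 - 1 = n + 1 from rfl, List.range_succ, List.map_append,
    List.prod_append, List.map_singleton, List.prod_singleton, rowFactor_eq_prod]
  congr 2
  refine List.map_congr_left fun t ht => ?_
  have ht : t ≤ n := Nat.lt_succ_iff.mp (List.mem_range.mp ht)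
  rw [hc, hc, Nat.add_sub_cancel, div_eq_mul_inv, ← pow_sub₀ q hq0 (by omega)]
  congr 3
  omega

theorem commute_rowFactor {σ : ℕ → A} {q : ℂ} {x : A} {a : ℕ}
    (h : ∀ j, 1 ≤ j → j ≤ a → Commute x (σ j)) : Commute x (rowFactor σ q a) := by
  induction a with
  | zero => exact Commute.one_right x
  | succ a ih =>
    refine Commute.mul_right ?_ (ih fun j hj hja => h j hj (by omega))
    exact (h (a + 1) (by omega) le_rfl).add_right (Algebra.commute_algebraMap_right _ x)

theorem rowFactor_mul_sub_eq_zero {σ : ℕ → A} {q : ℂ} (hq0 : q ≠ 0) (hq2 : q ^ 2 ≠ 1)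
    (h1 : σ 1 * σ 1 = 1 + (q - q⁻¹) • σ 1) {a : ℕ} (ha : 1 ≤ a) :
    rowFactor σ q a * (σ 1 - algebraMap ℂ A q) = 0 := by
  induction a, ha using Nat.le_induction with
  | base =>
    rw [rowFactor, rowFactor, mul_one, zero_add, mul_one, heckeBax_sq σ hq0 hq2]
    exact hecke_quadratic_factor hq0 h1
  | succ a _ ih => rw [rowFactor, mul_assoc, ih, mul_zero]

variable {σ : ℕ → A} {q : ℂ} {n : ℕ}

/-- The Yang–Baxter equation at `u = q^{2(i+1)}`, `v = q⁻²`, where `σ_j(q⁻²) = σ_j - q`. -/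
theorem heckeBax_pow_mul_heckeBax_pow_mul_sub (hσ : IsHeckeGenerators σ q n) (hq0 : q ≠ 0)
    (hq : ∀ m : ℕ, 1 ≤ m → m ≤ n → q ^ (2 * m) ≠ 1) {i : ℕ} (hi : 1 ≤ i) (hin : i + 1 ≤ n) :
    heckeBax σ q (i + 1) (q ^ (2 * (i + 1))) * heckeBax σ q i (q ^ (2 * i))
        * (σ (i + 1) - algebraMap ℂ A q)
      = (σ i - algebraMap ℂ A q) * heckeBax σ q (i + 1) (q ^ (2 * i))
        * heckeBax σ q i (q ^ (2 * (i + 1))) := by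
  have hq2 : q ^ 2 ≠ 1 := by simpa using hq 1 le_rfl (by omega)
  have huv : q ^ (2 * (i + 1)) * (q ^ 2)⁻¹ = q ^ (2 * i) := by
    field_simp
    ring
  have ybe := heckeBax_yangBaxter (hσ.braid i hi hin).symm (hσ.hecke (i + 1) (by omega) hin)
    (hσ.hecke i hi (by omega)) (hq (i + 1) (by omega) hin) (inv_ne_one.mpr hq2)
    (huv ▸ hq i hi (by omega))
  rwa [huv, heckeBax_inv_sq σ hq0 hq2, heckeBax_inv_sq σ hq0 hq2] at ybe

theorem mul_rowFactor_mul_sub_eq_zero (hσ : IsHeckeGenerators σ q n) (hq0 : q ≠ 0)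
    (hq : ∀ m : ℕ, 1 ≤ m → m ≤ n → q ^ (2 * m) ≠ 1) {i a : ℕ} (hi : 1 ≤ i) (hia : i + 1 ≤ a)
    (han : a ≤ n) {X : A} (hX : X * (σ i - algebraMap ℂ A q) = 0) :
    X * rowFactor σ q a * (σ (i + 1) - algebraMap ℂ A q) = 0 := by
  induction a, hia using Nat.le_induction generalizing X with
  | base =>
    obtain ⟨j, rfl⟩ : ∃ j, i = j + 1 := ⟨i - 1, by omega⟩
    have hR : Commute (σ (j + 2) - algebraMap ℂ A q) (rowFactor σ q j) :=
      commute_rowFactor fun l hl hlj =>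
        (Commute.sub_left (hσ.comm (j + 2) l (by omega) han hl (by omega) (Or.inr (by omega)))
          (Algebra.commute_algebraMap_left q _))
    calc X * rowFactor σ q (j + 2) * (σ (j + 2) - algebraMap ℂ A q)
        = X * (heckeBax σ q (j + 2) (q ^ (2 * (j + 2))) * heckeBax σ q (j + 1) (q ^ (2 * (j + 1)))
            * (σ (j + 2) - algebraMap ℂ A q)) * rowFactor σ q j := by
          rw [rowFactor, rowFactor, mul_assoc, mul_assoc, mul_assoc, ← hR.eq]
          simp only [mul_assoc]
      _ = X * (σ (j + 1) - algebraMap ℂ A q) * (heckeBax σ q (j + 2) (q ^ (2 * (j + 1)))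
            * heckeBax σ q (j + 1) (q ^ (2 * (j + 2)))) * rowFactor σ q j := by
          rw [heckeBax_pow_mul_heckeBax_pow_mul_sub hσ hq0 hq hi han]
          simp only [mul_assoc]
      _ = 0 := by rw [hX, zero_mul, zero_mul]
  | succ a hia ih =>
    have hf : Commute (heckeBax σ q (a + 1) (q ^ (2 * (a + 1)))) (σ i - algebraMap ℂ A q) :=
      (Commute.sub_right (hσ.comm (a + 1) i (by omega) han hi (by omega) (Or.inr (by omega)))
        (Algebra.commute_algebraMap_right q _)).add_left (Algebra.commute_algebraMap_left _ _)
    rw [rowFactor, ← mul_assoc]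
    exact ih (by omega) (by rw [mul_assoc, hf.eq, ← mul_assoc, hX, zero_mul])

theorem fusionE_mul_sub_eq_zero (hσ : IsHeckeGenerators σ q n) (hq0 : q ≠ 0)
    (hq : ∀ m : ℕ, 1 ≤ m → m ≤ n → q ^ (2 * m) ≠ 1) {c : ℕ → ℂ}
    (hc : ∀ j : ℕ, c j = q ^ (2 * (j - 1))) {i : ℕ} (hi : 1 ≤ i) (hin : i ≤ n) :
    fusionE σ q (n + 1) c * (σ i - algebraMap ℂ A q) = 0 := by
  induction n generalizing i with
  | zero => omega
  | succ n ih =>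
    rw [fusionE_succ σ hq0 hc n]
    obtain rfl | ⟨j, rfl⟩ : i = 1 ∨ ∃ j, i = j + 2 := by
      rcases i with _ | _ | j <;> simp_all
    · have hq2 : q ^ 2 ≠ 1 := by simpa using hq 1 le_rfl hin
      rw [mul_assoc, rowFactor_mul_sub_eq_zero hq0 hq2 (hσ.hecke 1 le_rfl hin) (by omega),
        mul_zero]
    · exact mul_rowFactor_mul_sub_eq_zero hσ hq0 hq (by omega) hin le_rfl
        (ih (hσ.mono n.le_succ) (fun m hm hmn => hq m hm (by omega)) (by omega) (by omega))

end

theorem fusion_one_row_q_symmetriser_general (A : Type*) [Ring A] [Algebra ℂ A]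
    (k : ℕ) (q : ℂ) (hq0 : q ≠ 0)
    (hq : ∀ m : ℕ, 1 ≤ m → m ≤ k - 1 → q ^ (2 * m) ≠ 1)
    (σ : ℕ → A)
    (hbraid : ∀ i : ℕ, 1 ≤ i → i + 1 ≤ k - 1 →
      σ i * σ (i + 1) * σ i = σ (i + 1) * σ i * σ (i + 1))
    (hcomm : ∀ i j : ℕ, 1 ≤ i → i ≤ k - 1 → 1 ≤ j → j ≤ k - 1 →
      (i + 1 < j ∨ j + 1 < i) → σ i * σ j = σ j * σ i)
    (hhecke : ∀ i : ℕ, 1 ≤ i → i ≤ k - 1 → σ i * σ i = 1 + (q - q⁻¹) • σ i)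
    (c : ℕ → ℂ) (hc : ∀ j : ℕ, c j = q ^ (2 * (j - 1))) :
    ∀ i : ℕ, 1 ≤ i → i ≤ k - 1 →
      fusionE σ q k c * σ i = q • fusionE σ q k c := by
  intro i hi hik
  have h := fusionE_mul_sub_eq_zero ⟨hbraid, hcomm, hhecke⟩ hq0 hq hc hi hik
  rw [Nat.sub_add_cancel (by omega : 1 ≤ k), mul_sub, sub_eq_zero, ← Algebra.commutes,
    ← Algebra.smul_def] at h
  exact h

theorem fusion_one_row_q_symmetriser (A : Type*) [Ring A] [Algebra ℂ A]
    (k : ℕ) (hk : 2 ≤ k) (q : ℂ) (hq0 : q ≠ 0)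
    (hq : ∀ m : ℕ, 1 ≤ m → m ≤ k - 1 → q ^ (2 * m) ≠ 1)
    (σ : ℕ → A)
    (hbraid : ∀ i : ℕ, 1 ≤ i → i + 1 ≤ k - 1 →
      σ i * σ (i + 1) * σ i = σ (i + 1) * σ i * σ (i + 1))
    (hcomm : ∀ i j : ℕ, 1 ≤ i → i ≤ k - 1 → 1 ≤ j → j ≤ k - 1 →
      (i + 1 < j ∨ j + 1 < i) → σ i * σ j = σ j * σ i)
    (hhecke : ∀ i : ℕ, 1 ≤ i → i ≤ k - 1 → σ i * σ i = 1 + (q - q⁻¹) • σ i)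
    (c : ℕ → ℂ) (hc : ∀ j : ℕ, c j = q ^ (2 * (j - 1))) :
    ∀ i : ℕ, 1 ≤ i → i ≤ k - 1 →
      fusionE σ q k c * σ i = q • fusionE σ q k c :=
  fusion_one_row_q_symmetriser_general A k q hq0 hq σ hbraid hcomm hhecke c hc
end

section
/- Let $A$ be a unital associative $\mathbb{C}$-algebra, let $q \in \mathbb{C}$ with $q \neq 0$ and $q^2 \neq 1$, let $a \in \mathbb{C}$, and let $\sigma \in A$ be invertible. Set $e = 1 - (q - q^{-1})^{-1}(\sigma - \sigma^{-1})$. If $e \sigma = a\, e$, then $\sigma$ satisfies the cubic characteristic equation $(\sigma - q)(\sigma + q^{-1})(\sigma - a) = 0$ in $A$. -/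
/-!
Writing `e = 1 - (q - q⁻¹)⁻¹ (σ - σ⁻¹)`, one has `(q - q⁻¹) σ e = (q - q⁻¹) σ - σ² + 1`, so the
quadratic factor is `(σ - q)(σ + q⁻¹) = -(q - q⁻¹) σ e`. Multiplying on the right by `σ - a`
gives `-(q - q⁻¹) σ (e σ - a e)`, which vanishes by hypothesis.
-/

theorem sub_inv_ne_zero_of_sq_ne_one {K : Type*} [Field K] {q : K} (hq0 : q ≠ 0)
    (hq2 : q ^ 2 ≠ 1) : q - q⁻¹ ≠ 0 := by
  intro h
  apply hq2
  rw [sq, ← mul_inv_cancel₀ hq0, ← sub_eq_zero.mp h]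

section

variable {K A : Type*} [Field K] [Ring A] [Algebra K A]

theorem sub_algebraMap_mul_add_algebraMap_inv (σ : A) {q : K} (hq0 : q ≠ 0) :
    (σ - algebraMap K A q) * (σ + algebraMap K A q⁻¹) = σ * σ - (q - q⁻¹) • σ - 1 := by
  rw [sub_mul, mul_add, mul_add, ← map_mul, mul_inv_cancel₀ hq0, map_one, ← Algebra.commutes,
    ← Algebra.smul_def, ← Algebra.smul_def, sub_smul]
  abel

theorem sub_algebraMap_mul_add_algebraMap_inv_eq_smul_mul (σ : Aˣ) {q : K} (hq0 : q ≠ 0)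
    (hd : q - q⁻¹ ≠ 0) :
    ((σ : A) - algebraMap K A q) * ((σ : A) + algebraMap K A q⁻¹)
      = -(q - q⁻¹) • ((σ : A) * (1 - (q - q⁻¹)⁻¹ • ((σ : A) - (↑σ⁻¹ : A)))) := by
  rw [sub_algebraMap_mul_add_algebraMap_inv _ hq0, mul_sub, mul_one, mul_smul_comm, mul_sub,
    Units.mul_inv, neg_smul, smul_sub, smul_smul, mul_inv_cancel₀ hd, one_smul]
  abel

end

theorem bmw_cubic_characteristic (A : Type*) [Ring A] [Algebra ℂ A]
    (q : ℂ) (hq0 : q ≠ 0) (hq2 : q ^ 2 ≠ 1) (a : ℂ) (σ : Aˣ) (e : A)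
    (he : e = 1 - (q - q⁻¹)⁻¹ • ((σ : A) - (↑σ⁻¹ : A)))
    (heσ : e * σ = a • e) :
    ((σ : A) - algebraMap ℂ A q) * ((σ : A) + algebraMap ℂ A q⁻¹)
      * ((σ : A) - algebraMap ℂ A a) = 0 := by
  have hquadratic : ((σ : A) - algebraMap ℂ A q) * ((σ : A) + algebraMap ℂ A q⁻¹)
      = -(q - q⁻¹) • ((σ : A) * e) := by
    rw [he]
    exact sub_algebraMap_mul_add_algebraMap_inv_eq_smul_mul σ hq0
      (sub_inv_ne_zero_of_sq_ne_one hq0 hq2)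
  have he_mul : e * ((σ : A) - algebraMap ℂ A a) = 0 := by
    rw [mul_sub, ← Algebra.commutes, ← Algebra.smul_def, heσ, sub_self]
  rw [hquadratic, smul_mul_assoc, mul_assoc, he_mul, mul_zero, smul_zero]
end
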